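/- arXiv:1907.04010 — 5 statements merged into one kernel-verified Lean document; each statement's English description precedes it below -/
import Mathlib

section
/- Let A be a (not necessarily commutative) ring, b an element of the center of A, and N a left A-module. Let F : ℤ → AddSubgroup N be a monotone (increasing) family of additive subgroups of N that is exhaustive (every element of N lies in F i for some i ∈ ℤ) and bounded below (there exists i₀ ∈ ℤ with F i = ⊥ for all i < i₀), and suppose there exist an index j ∈ ℤ and a finite subset S of F j such that S generates N as an A-module. If there exists an integer k ≥ 1 such that for every i ∈ ℤ and every x ∈ F i one has b^k • x ∈ F (i-1), then there exists an integer m ≥ 1 such that b^m • x = 0 for every x ∈ N. -/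
/-!
If `b ^ k` lowers the filtration index by one, then `b ^ (k * n)` moves a generator from `F j`
into `F (j - n)`, which is zero once `j - n` lies below the bound of the filtration. So a
power of `b` kills every generator, and since `b` is central, the elements killed by that
power form an `A`-submodule, which then has to be all of `N`.
-/

theorem smul_eq_zero_of_mem_center_of_span_eq_top {A N : Type*} [Semiring A] [AddCommMonoid N]
    [Module A N] {c : A} (hc : c ∈ Set.center A) {S : Set N} (hS : Submodule.span A S = ⊤)
    (hcS : ∀ s ∈ S, c • s = 0) (x : N) : c • x = 0 := by
  have hx : x ∈ Submodule.span A S := hS ▸ Submodule.mem_top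
  induction hx using Submodule.span_induction with
  | mem s hs => exact hcS s hs
  | zero => exact smul_zero c
  | add y z _ _ hy hz => rw [smul_add, hy, hz, add_zero]
  | smul a y _ hy =>
    rw [← mul_smul, ← Semigroup.mem_center_iff.mp hc a, mul_smul, hy, smul_zero]

theorem pow_smul_mem_sub_of_smul_mem_sub_one {M N : Type*} [Monoid M] [MulAction M N]
    {a : M} {F : ℤ → Set N} (ha : ∀ i, ∀ x ∈ F i, a • x ∈ F (i - 1)) (n : ℕ) {i : ℤ} {x : N}
    (hx : x ∈ F i) : a ^ n • x ∈ F (i - n) := by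
  induction n generalizing i x with
  | zero => simpa using hx
  | succ n ih =>
    rw [pow_succ, mul_smul, Nat.cast_succ, ← sub_sub, sub_right_comm]
    exact ih (ha i x hx)

theorem stmt_0_general {A : Type*} [Ring A] {N : Type*} [AddCommGroup N] [Module A N]
    (b : A) (hb : b ∈ Set.center A) (F : ℤ → AddSubgroup N)
    (hbdd : ∃ i₀ : ℤ, ∀ i < i₀, F i = ⊥)
    (hgen : ∃ (j : ℤ) (S : Finset N), (↑S : Set N) ⊆ (F j : Set N) ∧
      Submodule.span A (↑S : Set N) = ⊤)
    (hk : ∃ k : ℕ, 1 ≤ k ∧ ∀ i : ℤ, ∀ x ∈ F i, b ^ k • x ∈ F (i - 1)) :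
    ∃ m : ℕ, 1 ≤ m ∧ ∀ x : N, b ^ m • x = 0 := by
  obtain ⟨i₀, hi₀⟩ := hbdd
  obtain ⟨j, S, hSj, hspan⟩ := hgen
  obtain ⟨k, hk1, hkshift⟩ := hk
  set n := (j - i₀).toNat + 1
  refine ⟨k * n, Nat.mul_pos hk1 (Nat.succ_pos _), ?_⟩
  refine smul_eq_zero_of_mem_center_of_span_eq_top ((Submonoid.center A).pow_mem hb _) hspan
    fun s hs => ?_
  have hmem : b ^ (k * n) • s ∈ F (j - n) := by
    rw [pow_mul]
    exact pow_smul_mem_sub_of_smul_mem_sub_one (F := fun i => (F i : Set N)) hkshift n (hSj hs)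
  rwa [hi₀ _ (by omega), AddSubgroup.mem_bot] at hmem

/-- Key step in Lemma 3.9 of Budur–van der Veer–Wu–Zhou, "Zeroes of Bernstein-Sato ideals":
if a central element `b` of a (possibly noncommutative) ring `A` satisfies that some power
`b^k` shifts a bounded-below, exhaustive, monotone filtration by additive subgroups of a
finitely generated `A`-module `N` (generated by finitely many elements in some filtration
step), then some power `b^m` annihilates `N`. -/
theorem stmt_0 {A : Type*} [Ring A] {N : Type*} [AddCommGroup N] [Module A N]
    (b : A) (hb : b ∈ Set.center A) (F : ℤ → AddSubgroup N)
    (hmono : Monotone F)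
    (hexh : ∀ x : N, ∃ i : ℤ, x ∈ F i)
    (hbdd : ∃ i₀ : ℤ, ∀ i < i₀, F i = ⊥)
    (hgen : ∃ (j : ℤ) (S : Finset N), (↑S : Set N) ⊆ (F j : Set N) ∧
      Submodule.span A (↑S : Set N) = ⊤)
    (hk : ∃ k : ℕ, 1 ≤ k ∧ ∀ i : ℤ, ∀ x ∈ F i, b ^ k • x ∈ F (i - 1)) :
    ∃ m : ℕ, 1 ≤ m ∧ ∀ x : N, b ^ m • x = 0 :=
  stmt_0_general b hb F hbdd hgen hk
end

section
/- Let R be a commutative ring, N an R-module, and F : ℤ → Submodule R N a monotone (increasing) family of submodules that is exhaustive (every element of N lies in F i for some i ∈ ℤ) and bounded below (there exists i₀ ∈ ℤ with F i = ⊥ for all i < i₀). Let 𝔭 be a prime ideal of R. Then the localization of N at 𝔭 is nonzero if and only if there exists i ∈ ℤ such that the localization at 𝔭 of the quotient module (F i) / (F (i-1)) is nonzero. -/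
/-!
Localization at `𝔭` is exact, so on the level of supports each short exact sequence
`0 → F (i-1) → F i → F i / F (i-1) → 0` gives `Supp F i ⊆ Supp F (i-1) ∪ Supp (F i / F (i-1))`.
Starting from `F i = 0` for `i ≪ 0`, induction puts every `Supp F i` inside the union of the
supports of the graded pieces, and exhaustiveness gives `Supp N = ⋃ i, Supp F i`. Conversely each
graded piece is a subquotient of `N`, so its support lies in `Supp N`.
-/

open Module

section

variable {R M : Type*} [CommRing R] [AddCommGroup M] [Module R M]

namespace Submodule

lemma support_subset_union_support_quotient (P Q : Submodule R M) :
    support R Q ⊆ support R P ∪ support R (Q ⧸ P.comap Q.subtype) := by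
  rw [support_of_exact (LinearMap.exact_subtype_mkQ (P.comap Q.subtype))
    (Submodule.injective_subtype _) (Submodule.mkQ_surjective _)]
  refine Set.union_subset_union_left _ (support_subset_of_injective
    (LinearMap.codRestrict P (Q.subtype ∘ₗ (P.comap Q.subtype).subtype) fun x ↦ x.2) ?_)
  intro x y hxy
  exact Subtype.ext (Subtype.ext congr($hxy.1))

lemma support_quotient_comap_subtype_subset (P Q : Submodule R M) :
    support R (Q ⧸ P.comap Q.subtype) ⊆ support R M :=
  (support_subset_of_surjective _ (Submodule.mkQ_surjective _)).trans
    (support_subset_of_injective _ Q.injective_subtype)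

lemma support_subset_iUnion_support_of_forall_exists_mem {ι : Type*} (F : ι → Submodule R M)
    (hF : ∀ x : M, ∃ i, x ∈ F i) :
    support R M ⊆ ⋃ i, support R (F i) := by
  intro p hp
  obtain ⟨x, hx⟩ := mem_support_iff'.mp hp
  obtain ⟨i, hxi⟩ := hF x
  refine Set.mem_iUnion.mpr ⟨i, mem_support_iff'.mpr ⟨⟨x, hxi⟩, fun r hr h ↦ hx r hr ?_⟩⟩
  simpa using congr($h.1)

end Submodule

open Submodule

abbrev gradedPiece (F : ℤ → Submodule R M) (i : ℤ) : Type _ :=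
  F i ⧸ (F (i - 1)).comap (F i).subtype

lemma support_subset_iUnion_support_gradedPiece (F : ℤ → Submodule R M) {i₀ : ℤ}
    (hbot : ∀ i < i₀, F i = ⊥) (i : ℤ) :
    support R (F i) ⊆ ⋃ j, support R (gradedPiece F j) := by
  have support_bot : ∀ i < i₀, support R (F i) = ∅ := fun i hi ↦ by
    rw [hbot i hi]
    exact support_eq_empty
  rcases lt_or_ge i (i₀ - 1) with hi | hi
  · simp [support_bot i (by omega)]
  induction i, hi using Int.leInduction with
  | base => simp [support_bot (i₀ - 1) (by omega)]
  | succ n _ ih =>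
    refine (support_subset_union_support_quotient (F (n + 1 - 1)) (F (n + 1))).trans
      (Set.union_subset ?_ (Set.subset_iUnion (fun j ↦ support R (gradedPiece F j)) (n + 1)))
    rwa [add_sub_cancel_right]

lemma support_eq_iUnion_support_gradedPiece (F : ℤ → Submodule R M)
    (hexh : ∀ x : M, ∃ i, x ∈ F i) {i₀ : ℤ} (hbot : ∀ i < i₀, F i = ⊥) :
    support R M = ⋃ i, support R (gradedPiece F i) :=
  subset_antisymm
    ((support_subset_iUnion_support_of_forall_exists_mem F hexh).trans
      (Set.iUnion_subset (support_subset_iUnion_support_gradedPiece F hbot)))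
    (Set.iUnion_subset fun _ ↦ support_quotient_comap_subtype_subset _ _)

end

theorem stmt_1_general {R : Type*} [CommRing R] {N : Type*} [AddCommGroup N] [Module R N]
    (F : ℤ → Submodule R N)
    (hexh : ∀ x : N, ∃ i : ℤ, x ∈ F i)
    (hbdd : ∃ i₀ : ℤ, ∀ i < i₀, F i = ⊥)
    (𝔭 : Ideal R) [𝔭.IsPrime] :
    Nontrivial (LocalizedModule 𝔭.primeCompl N) ↔
      ∃ i : ℤ, Nontrivial (LocalizedModule 𝔭.primeCompl
        (↥(F i) ⧸ (Submodule.comap (F i).subtype (F (i - 1))))) := by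
  obtain ⟨i₀, hbot⟩ := hbdd
  have h := Set.ext_iff.mp (support_eq_iUnion_support_gradedPiece F hexh hbot) ⟨𝔭, ‹_›⟩
  simpa only [Set.mem_iUnion, mem_support_iff] using h

/-- supp_R(gr N) = supp_R(N), proved inside Lemma 3.9 of Budur–van der Veer–Wu–Zhou:
for a monotone, exhaustive, bounded-below filtration `F` of an `R`-module `N` by submodules,
the localization of `N` at a prime `𝔭` is nonzero iff the localization of some graded piece
`F i / F (i-1)` at `𝔭` is nonzero. -/
theorem stmt_1 {R : Type*} [CommRing R] {N : Type*} [AddCommGroup N] [Module R N]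
    (F : ℤ → Submodule R N) (hmono : Monotone F)
    (hexh : ∀ x : N, ∃ i : ℤ, x ∈ F i)
    (hbdd : ∃ i₀ : ℤ, ∀ i < i₀, F i = ⊥)
    (𝔭 : Ideal R) [𝔭.IsPrime] :
    Nontrivial (LocalizedModule 𝔭.primeCompl N) ↔
      ∃ i : ℤ, Nontrivial (LocalizedModule 𝔭.primeCompl
        (↥(F i) ⧸ (Submodule.comap (F i).subtype (F (i - 1))))) :=
  stmt_1_general F hexh hbdd 𝔭
end

section
/- Let R be a commutative ring, N an R-module, b ∈ R, and F : ℤ → Submodule R N a monotone (increasing) family of submodules that is exhaustive (every element of N lies in F i for some i ∈ ℤ). If multiplication by b is injective on every graded piece, i.e. for every j ∈ ℤ and every x ∈ F j with b • x ∈ F (j-1) one has x ∈ F (j-1), then for every i ∈ ℤ and every x ∈ N, b • x ∈ F i implies x ∈ F i (that is, multiplication by b is injective on the quotient module N / F i). -/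
theorem Submodule.mem_of_smul_mem_of_mem_of_injective_gr {R N : Type*} [CommRing R]
    [AddCommGroup N] [Module R N] {b : R} {F : ℤ → Submodule R N} (hmono : Monotone F)
    (hinj : ∀ j : ℤ, ∀ x ∈ F j, b • x ∈ F (j - 1) → x ∈ F (j - 1))
    {i j : ℤ} {x : N} (hbx : b • x ∈ F i) (hx : x ∈ F j) : x ∈ F i := by
  rcases le_total j i with hji | hij
  · exact hmono hji hx
  induction j, hij using Int.leInduction with
  | base => exact hx
  | succ k hik ih =>
    -- `b • x ∈ F i ⊆ F k`, so injectivity on the piece `F (k + 1) / F k` lowers the level of `x`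
    have hxk : x ∈ F k := by
      simpa using hinj (k + 1) x hx (by simpa using hmono hik hbx)
    exact ih hxk

/-- If multiplication by `b ∈ R` is injective on every graded piece of a monotone, exhaustive
filtration `F` of an `R`-module `N`, then multiplication by `b` is injective on each quotient
`N / F i`: `b • x ∈ F i` implies `x ∈ F i` (claim inside the proof of Proposition 3.14 of
Budur–van der Veer–Wu–Zhou). -/
theorem stmt_3 {R : Type*} [CommRing R] {N : Type*} [AddCommGroup N] [Module R N]
    (b : R) (F : ℤ → Submodule R N) (hmono : Monotone F)
    (hexh : ∀ x : N, ∃ i : ℤ, x ∈ F i)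
    (hinj : ∀ j : ℤ, ∀ x ∈ F j, b • x ∈ F (j - 1) → x ∈ F (j - 1)) :
    ∀ i : ℤ, ∀ x : N, b • x ∈ F i → x ∈ F i := by
  intro i x hbx
  obtain ⟨j, hj⟩ := hexh x
  exact Submodule.mem_of_smul_mem_of_mem_of_injective_gr hmono hinj hbx hj
end

section
/- Let R be a commutative ring, N an R-module, b ∈ R, and F : ℤ → Submodule R N a monotone (increasing) family of submodules that is exhaustive (every element of N lies in F i for some i ∈ ℤ). Assume multiplication by b is injective on every graded piece, i.e. for every j ∈ ℤ and every x ∈ F j with b • x ∈ F (j-1) one has x ∈ F (j-1). Then for every i ∈ ℤ, (F i) ⊓ (b • N) = b • (F i), where b • P denotes the image of a submodule P under the R-linear map x ↦ b • x. In other words, the filtration on N/bN induced from F coincides with the filtration by the images F i / b (F i). -/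
/-! The inclusion `b • F i ⊆ F i ⊓ b • N` is clear. Conversely, if `b • y ∈ F i`, pick `j` with
`y ∈ F j`; while `j > i` we have `b • y ∈ F i ⊆ F (j - 1)`, so injectivity of `b` on `F j / F (j - 1)`
pushes `y` down to `F (j - 1)`, and after finitely many steps `y ∈ F i`. Hence `b⁻¹ (F i) = F i`,
and taking images under `b` gives the claim. -/

section GradedInjective

variable {R : Type*} [CommRing R] {N : Type*} [AddCommGroup N] [Module R N]
  {b : R} {F : ℤ → Submodule R N}

theorem filtration_mem_of_smul_mem_of_le (hmono : Monotone F)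
    (hinj : ∀ j : ℤ, ∀ x ∈ F j, b • x ∈ F (j - 1) → x ∈ F (j - 1))
    {i j : ℤ} (hij : i ≤ j) {y : N} (hy : y ∈ F j) (hby : b • y ∈ F i) : y ∈ F i := by
  induction j, hij using Int.leInduction with
  | base => exact hy
  | succ j hij ih =>
    have hby' : b • y ∈ F (j + 1 - 1) := by
      rw [add_sub_cancel_right]
      exact hmono hij hby
    have hy' := hinj (j + 1) y hy hby'
    rw [add_sub_cancel_right] at hy'
    exact ih hy'

theorem filtration_mem_of_smul_mem (hmono : Monotone F) (hexh : ∀ x : N, ∃ i : ℤ, x ∈ F i)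
    (hinj : ∀ j : ℤ, ∀ x ∈ F j, b • x ∈ F (j - 1) → x ∈ F (j - 1))
    {i : ℤ} {y : N} (hby : b • y ∈ F i) : y ∈ F i := by
  obtain ⟨j, hy⟩ := hexh y
  rcases le_total j i with hji | hij
  · exact hmono hji hy
  · exact filtration_mem_of_smul_mem_of_le hmono hinj hij hy hby

theorem filtration_comap_lsmul_eq (hmono : Monotone F) (hexh : ∀ x : N, ∃ i : ℤ, x ∈ F i)
    (hinj : ∀ j : ℤ, ∀ x ∈ F j, b • x ∈ F (j - 1) → x ∈ F (j - 1)) (i : ℤ) :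
    (F i).comap (LinearMap.lsmul R N b) = F i :=
  le_antisymm (fun _ hby => filtration_mem_of_smul_mem hmono hexh hinj hby)
    (fun _ hy => (F i).smul_mem b hy)

end GradedInjective

/-- If multiplication by `b ∈ R` is injective on every graded piece of a monotone, exhaustive
filtration `F` of an `R`-module `N`, then `F i ⊓ b•N = b•(F i)` for every `i`: the filtration
induced on `N/bN` coincides with the filtration by the images `F i / b(F i)` (established by
the snake lemma in the proof of Proposition 3.14 of Budur–van der Veer–Wu–Zhou). -/
theorem stmt_4 {R : Type*} [CommRing R] {N : Type*} [AddCommGroup N] [Module R N]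
    (b : R) (F : ℤ → Submodule R N) (hmono : Monotone F)
    (hexh : ∀ x : N, ∃ i : ℤ, x ∈ F i)
    (hinj : ∀ j : ℤ, ∀ x ∈ F j, b • x ∈ F (j - 1) → x ∈ F (j - 1)) :
    ∀ i : ℤ, F i ⊓ Submodule.map (LinearMap.lsmul R N b) ⊤ =
      Submodule.map (LinearMap.lsmul R N b) (F i) := by
  intro i
  rw [Submodule.map_top, inf_comm, ← Submodule.map_comap_eq,
    filtration_comap_lsmul_eq hmono hexh hinj]
end

section
/- Let R be a commutative ring, N an R-module, b ∈ R, and F : ℤ → Submodule R N a monotone (increasing) family of submodules that is exhaustive (every element of N lies in F i for some i ∈ ℤ). Assume multiplication by b is injective on every graded piece, i.e. for every j ∈ ℤ and every x ∈ F j with b • x ∈ F (j-1) one has x ∈ F (j-1). Then for every i ∈ ℤ, (F i) ⊓ (F (i-1) ⊔ b • N) = F (i-1) ⊔ b • (F i), where b • P denotes the image of a submodule P under the R-linear map x ↦ b • x. (Equivalently, the i-th graded piece of the quotient module N/(b•N), with its induced filtration, is isomorphic to the quotient of the graded piece F i / F (i-1) by the image of multiplication by b on it: gr(N ⊗ R/(b))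 ≅ (gr N) ⊗ R/(b).) -/
/-!
If `b • z ∈ F i` and `z ∈ F j` with `j ≥ i`, injectivity of `b` on the graded pieces pushes `z`
down one step at a time to `F i`; exhaustiveness supplies such a `j`. Hence `b⁻¹ (F i) = F i`,
and the identity follows from the modular law: `F i ⊓ (F (i-1) ⊔ bN) = F (i-1) ⊔ (F i ⊓ bN)`
and `F i ⊓ bN = b (b⁻¹ (F i)) = b (F i)`.
-/

namespace Submodule

theorem inf_sup_map_top_eq_sup_map {R N : Type*} [Ring R] [AddCommGroup N] [Module R N]
    {P Q : Submodule R N} (f : N →ₗ[R] N) (hPQ : P ≤ Q) (hf : Q.comap f = Q) :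
    Q ⊓ (P ⊔ map f ⊤) = P ⊔ map f Q := by
  rw [inf_comm, sup_inf_assoc_of_le _ hPQ, map_top, ← map_comap_eq, hf]

section Filtration

variable {R N : Type*} [Semiring R] [AddCommMonoid N] [Module R N] {F : ℤ → Submodule R N}
  {b : R}

theorem mem_of_smul_mem_of_mem_of_le (hmono : Monotone F)
    (hinj : ∀ j : ℤ, ∀ x ∈ F j, b • x ∈ F (j - 1) → x ∈ F (j - 1)) {i j : ℤ} {z : N}
    (hij : i ≤ j) (hz : z ∈ F j) (hbz : b • z ∈ F i) : z ∈ F i := by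
  induction j, hij using Int.leInduction with
  | base => exact hz
  | succ j hij ih => exact ih (by simpa using hinj (j + 1) z hz (by simpa using hmono hij hbz))

theorem mem_of_smul_mem (hmono : Monotone F) (hexh : ∀ x : N, ∃ i : ℤ, x ∈ F i)
    (hinj : ∀ j : ℤ, ∀ x ∈ F j, b • x ∈ F (j - 1) → x ∈ F (j - 1)) {i : ℤ} {z : N}
    (hbz : b • z ∈ F i) : z ∈ F i :=
  let ⟨j, hj⟩ := hexh z
  mem_of_smul_mem_of_mem_of_le hmono hinj (le_max_left i j) (hmono (le_max_right i j) hj) hbz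

end Filtration

end Submodule

/-- Identity (3.4) of Budur–van der Veer–Wu–Zhou, `gr(N ⊗_R R/(b)) ≅ (gr N) ⊗_R R/(b)`,
expressed as an equality of submodules of `N`: if multiplication by `b ∈ R` is injective on
every graded piece of a monotone, exhaustive filtration `F` of an `R`-module `N`, then
`F i ⊓ (F (i-1) ⊔ b•N) = F (i-1) ⊔ b•(F i)` for every `i`. -/
theorem stmt_5 {R : Type*} [CommRing R] {N : Type*} [AddCommGroup N] [Module R N]
    (b : R) (F : ℤ → Submodule R N) (hmono : Monotone F)
    (hexh : ∀ x : N, ∃ i : ℤ, x ∈ F i)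
    (hinj : ∀ j : ℤ, ∀ x ∈ F j, b • x ∈ F (j - 1) → x ∈ F (j - 1)) :
    ∀ i : ℤ, F i ⊓ (F (i - 1) ⊔ Submodule.map (LinearMap.lsmul R N b) ⊤) =
      F (i - 1) ⊔ Submodule.map (LinearMap.lsmul R N b) (F i) := by
  intro i
  have hcomap : (F i).comap (LinearMap.lsmul R N b) = F i :=
    le_antisymm (fun _ hz ↦ Submodule.mem_of_smul_mem hmono hexh hinj hz)
      (fun _ hz ↦ (F i).smul_mem b hz)
  exact Submodule.inf_sup_map_top_eq_sup_map _ (hmono (Int.sub_le_self i zero_le_one)) hcomap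
end
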